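/- arXiv:2402.10221 — 4 statements merged into one kernel-verified Lean document; each statement's English description precedes it below -/
import Mathlib

section
/- One step of the projected subgradient method decreases distance to the optimum up to an error term: if f is convex and L-Lipschitz on a closed convex set 𝒳, x_s ∈ 𝒳, g_s is a subgradient of f at x_s with ‖g_s‖ ≤ L, x_{s+1} is the projection of x_s - η_s g_s onto 𝒳, and x* ∈ 𝒳, then f(x_s) - f(x*) ≤ (1/(2η_s))(‖x_s - x*‖² - ‖x_{s+1} - x*‖²) + (η_s/2)L². -/
open scoped RealInnerProductSpace

theorem stmt_2 {n : ℕ} (𝒳 : Set (EuclideanSpace ℝ (Fin n)))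
    (hclosed : IsClosed 𝒳) (hconvex : Convex ℝ 𝒳)
    (f : EuclideanSpace ℝ (Fin n) → ℝ) (hf : ConvexOn ℝ 𝒳 f)
    (L : ℝ) (hLip : LipschitzOnWith (Real.toNNReal L) f 𝒳)
    (xs gs xnext xstar : EuclideanSpace ℝ (Fin n)) (ηs : ℝ) (hη : 0 < ηs)
    (hxs : xs ∈ 𝒳) (hxstar : xstar ∈ 𝒳)
    (hsub : ∀ z ∈ 𝒳, f xs + ⟪gs, z - xs⟫ ≤ f z)
    (hg : ‖gs‖ ≤ L)
    (hnextmem : xnext ∈ 𝒳)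
    (hproj : ∀ z ∈ 𝒳, ‖xnext - (xs - ηs • gs)‖ ≤ ‖z - (xs - ηs • gs)‖) :
    f xs - f xstar ≤
      (1 / (2 * ηs)) * (‖xs - xstar‖ ^ 2 - ‖xnext - xstar‖ ^ 2) + (ηs / 2) * L ^ 2 := by
  set y := xs - ηs • gs with hy
  haveI : Nonempty 𝒳 := ⟨⟨xstar, hxstar⟩⟩
  -- xnext attains the infimum distance to y
  have hbdd : BddBelow (Set.range fun w : 𝒳 => ‖y - (w : EuclideanSpace ℝ (Fin n))‖) := by
    refine ⟨0, ?_⟩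
    rintro _ ⟨w, rfl⟩
    exact norm_nonneg _
  have hinf : ‖y - xnext‖ = ⨅ w : 𝒳, ‖y - w‖ := by
    apply le_antisymm
    · apply le_ciInf
      intro w
      rw [norm_sub_rev, norm_sub_rev y w]
      exact hproj w w.2
    · exact ciInf_le hbdd ⟨xnext, hnextmem⟩
  have hvar : ⟪y - xnext, xstar - xnext⟫ ≤ 0 :=
    (norm_eq_iInf_iff_real_inner_le_zero hconvex hnextmem).mp hinf xstar hxstar
  -- ‖xnext - xstar‖² ≤ ‖y - xstar‖²
  have h2 : ‖xnext - xstar‖ ^ 2 ≤ ‖y - xstar‖ ^ 2 := by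
    have hexp : ‖y - xstar‖ ^ 2 =
        ‖y - xnext‖ ^ 2 + 2 * ⟪y - xnext, xnext - xstar⟫ + ‖xnext - xstar‖ ^ 2 := by
      have : y - xstar = (y - xnext) + (xnext - xstar) := by abel
      rw [this, norm_add_sq_real]
    have : ⟪y - xnext, xnext - xstar⟫ = -⟪y - xnext, xstar - xnext⟫ := by
      rw [← inner_neg_right]; congr 1; abel
    nlinarith [sq_nonneg ‖y - xnext‖]
  -- expand ‖y - xstar‖²
  have h3 : ‖y - xstar‖ ^ 2 =
      ‖xs - xstar‖ ^ 2 - 2 * ηs * ⟪gs, xs - xstar⟫ + ηs ^ 2 * ‖gs‖ ^ 2 := by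
    have h0 : y - xstar = (xs - xstar) - ηs • gs := by rw [hy]; abel
    rw [h0, norm_sub_sq_real, inner_smul_right, norm_smul, real_inner_comm]
    simp [mul_pow, abs_of_pos hη]
    ring
  have h1 : f xs - f xstar ≤ ⟪gs, xs - xstar⟫ := by
    have := hsub xstar hxstar
    have hneg : ⟪gs, xstar - xs⟫ = -⟪gs, xs - xstar⟫ := by
      rw [← inner_neg_right]; congr 1; abel
    linarith [this, hneg ▸ this]
  have hgn : 0 ≤ ‖gs‖ := norm_nonneg _
  have hL2 : ‖gs‖ ^ 2 ≤ L ^ 2 := by nlinarith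
  have hpos : (0:ℝ) < 2 * ηs := by linarith
  rw [← sub_nonneg]
  have expand : 1 / (2 * ηs) * (‖xs - xstar‖ ^ 2 - ‖xnext - xstar‖ ^ 2) + ηs / 2 * L ^ 2
      - (f xs - f xstar)
      = (‖xs - xstar‖ ^ 2 - ‖xnext - xstar‖ ^ 2 + ηs ^ 2 * L ^ 2
          - 2 * ηs * (f xs - f xstar)) / (2 * ηs) := by
    field_simp
  rw [expand]
  apply div_nonneg _ (le_of_lt hpos)
  nlinarith
end

section
/- Projected subgradient method with general weighted averaging: Let 𝒳 ⊂ ℝⁿ be a compact convex set contained in the ball B(x*, R), f convex and L-Lipschitz on 𝒳 (all subgradients bounded in norm by L), x* a minimizer of f on 𝒳. Let {η_s} be positive and non-increasing, and let x_{s+1} be the projection onto 𝒳 of x_s - η_s g_s with g_s ∈ ∂f(x_s). Then for any fixed k ≥ -1, f( (Σ_{s=1}^t x_s/η_s^k) / (Σ_{s=1}^t 1/η_s^k) ) - f(x*) ≤ ( R²/η_t^{k+1} + L² Σ_{s=1}^t 1/η_s^{k-1} ) / ( 2 Σ_{s=1}^t 1/η_s^k ). -/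
set_option maxHeartbeats 1000000


open Finset
open scoped RealInnerProductSpace

theorem stmt_4 {n : ℕ} (𝒳 : Set (EuclideanSpace ℝ (Fin n)))
    (hcompact : IsCompact 𝒳) (hconvex : Convex ℝ 𝒳)
    (f : EuclideanSpace ℝ (Fin n) → ℝ) (hf : ConvexOn ℝ 𝒳 f)
    (xstar : EuclideanSpace ℝ (Fin n)) (R L : ℝ) (hR : 0 < R) (hL : 0 < L)
    (hball : 𝒳 ⊆ Metric.closedBall xstar R)
    (hxstar : xstar ∈ 𝒳) (hmin : ∀ z ∈ 𝒳, f xstar ≤ f z)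
    (η : ℕ → ℝ) (hη_pos : ∀ s, 1 ≤ s → 0 < η s)
    (hη_mono : ∀ s, 1 ≤ s → η (s + 1) ≤ η s)
    (x g : ℕ → EuclideanSpace ℝ (Fin n))
    (hx1 : x 1 ∈ 𝒳)
    (hsub : ∀ s, 1 ≤ s → ∀ z ∈ 𝒳, f (x s) + ⟪g s, z - x s⟫ ≤ f z)
    (hg : ∀ s, 1 ≤ s → ‖g s‖ ≤ L)
    (hmem : ∀ s, 1 ≤ s → x (s + 1) ∈ 𝒳)
    (hproj : ∀ s, 1 ≤ s → ∀ z ∈ 𝒳,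
      ‖x (s + 1) - (x s - η s • g s)‖ ≤ ‖z - (x s - η s • g s)‖)
    (k : ℝ) (hk : -1 ≤ k) (t : ℕ) (ht : 1 ≤ t) :
    f ((∑ s ∈ Finset.Icc 1 t, ((η s) ^ k)⁻¹)⁻¹ •
        ∑ s ∈ Finset.Icc 1 t, ((η s) ^ k)⁻¹ • x s) - f xstar ≤
      (R ^ 2 / (η t) ^ (k + 1) + L ^ 2 * ∑ s ∈ Finset.Icc 1 t, ((η s) ^ (k - 1))⁻¹) /
        (2 * ∑ s ∈ Finset.Icc 1 t, ((η s) ^ k)⁻¹) := by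
  have hXne : Nonempty ↥𝒳 := ⟨⟨xstar, hxstar⟩⟩
  -- membership of all iterates
  have hxmem : ∀ s, 1 ≤ s → x s ∈ 𝒳 := by
    intro s hs
    rcases Nat.exists_eq_succ_of_ne_zero (by omega : s ≠ 0) with ⟨m, rfl⟩
    rcases Nat.eq_zero_or_pos m with h | h
    · subst h; exact hx1
    · exact hmem m h
  set D : ℕ → ℝ := fun s => ‖x s - xstar‖ ^ 2 with hD
  have hDnonneg : ∀ s, 0 ≤ D s := fun s => sq_nonneg _
  have hDR : ∀ s, 1 ≤ s → D s ≤ R ^ 2 := by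
    intro s hs
    have h1 : dist (x s) xstar ≤ R := Metric.mem_closedBall.mp (hball (hxmem s hs))
    have h2 : ‖x s - xstar‖ ≤ R := by rwa [dist_eq_norm] at h1
    exact pow_le_pow_left₀ (norm_nonneg _) h2 2
  -- projection step: contraction of squared distance
  have hproj2 : ∀ s, 1 ≤ s → D (s + 1) ≤ ‖(x s - η s • g s) - xstar‖ ^ 2 := by
    intro s hs
    set y := x s - η s • g s with hy
    have hinf : ‖y - x (s + 1)‖ = ⨅ w : 𝒳, ‖y - w‖ := by
      apply le_antisymm
      · apply le_ciInf
        intro w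
        have h := hproj s hs w w.2
        rw [norm_sub_rev (x (s + 1)) y, norm_sub_rev (w : EuclideanSpace ℝ (Fin n)) y] at h
        exact h
      · have hbdd : BddBelow (Set.range fun w : 𝒳 => ‖y - (w : EuclideanSpace ℝ (Fin n))‖) := by
          refine ⟨0, ?_⟩
          rintro _ ⟨w, rfl⟩
          exact norm_nonneg _
        exact ciInf_le hbdd ⟨x (s + 1), hmem s hs⟩
    have hchar := (norm_eq_iInf_iff_real_inner_le_zero hconvex (hmem s hs)).mp hinf
    have hip : ⟪y - x (s + 1), xstar - x (s + 1)⟫ ≤ 0 := hchar xstar hxstar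
    have hexp : ‖y - xstar‖ ^ 2 =
        ‖y - x (s + 1)‖ ^ 2 + 2 * ⟪y - x (s + 1), x (s + 1) - xstar⟫ +
          ‖x (s + 1) - xstar‖ ^ 2 := by
      have := norm_add_sq_real (y - x (s + 1)) (x (s + 1) - xstar)
      have h' : y - x (s + 1) + (x (s + 1) - xstar) = y - xstar := by abel
      rw [h'] at this
      linarith [this]
    have hip' : ⟪y - x (s + 1), x (s + 1) - xstar⟫ ≥ 0 := by
      have : x (s + 1) - xstar = -(xstar - x (s + 1)) := by abel
      rw [this, inner_neg_right]
      linarith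
    have := sq_nonneg ‖y - x (s + 1)‖
    simp only [hD]
    nlinarith
  -- per-step inequality
  have hstep : ∀ s, 1 ≤ s →
      ((η s) ^ k)⁻¹ * (f (x s) - f xstar) ≤
        (((η s) ^ (k + 1))⁻¹ * (D s - D (s + 1)) + L ^ 2 * ((η s) ^ (k - 1))⁻¹) / 2 := by
    intro s hs
    have hηs := hη_pos s hs
    have hsubs : f (x s) - f xstar ≤ ⟪g s, x s - xstar⟫ := by
      have := hsub s hs xstar hxstar
      have h2 : xstar - x s = -(x s - xstar) := by abel
      rw [h2, inner_neg_right] at this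
      linarith
    have hexp : ‖(x s - η s • g s) - xstar‖ ^ 2 =
        D s - 2 * (η s * ⟪g s, x s - xstar⟫) + (η s) ^ 2 * ‖g s‖ ^ 2 := by
      have h1 : (x s - η s • g s) - xstar = (x s - xstar) - η s • g s := by abel
      rw [h1, norm_sub_sq_real, real_inner_smul_right, norm_smul]
      simp only [hD, Real.norm_eq_abs, mul_pow, sq_abs]
      rw [real_inner_comm]
      try ring
    have hgL : ‖g s‖ ^ 2 ≤ L ^ 2 :=
      pow_le_pow_left₀ (norm_nonneg _) (hg s hs) 2
    have hbase : 2 * (η s) * (f (x s) - f xstar) ≤ D s - D (s + 1) + (η s) ^ 2 * L ^ 2 := by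
      have hd := hproj2 s hs
      rw [hexp] at hd
      nlinarith [hηs]
    -- rpow identities
    have hu : 0 < (η s) ^ (k - 1) := Real.rpow_pos_of_pos hηs _
    have e1 : (η s) ^ k = (η s) ^ (k - 1) * η s := by
      rw [show k = (k - 1) + 1 by ring, Real.rpow_add_one hηs.ne']
      ring_nf
    have e2 : (η s) ^ (k + 1) = (η s) ^ (k - 1) * (η s) ^ 2 := by
      rw [show k + 1 = (k - 1) + (2:ℕ) by push_cast; ring, Real.rpow_add hηs,
        Real.rpow_natCast]
    rw [e1, e2, ← sub_nonneg]
    have hη2 : (0:ℝ) < (η s) ^ 2 := by positivity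
    have key : (((η s) ^ (k - 1) * (η s) ^ 2)⁻¹ * (D s - D (s + 1)) +
          L ^ 2 * ((η s) ^ (k - 1))⁻¹) / 2 -
        ((η s) ^ (k - 1) * η s)⁻¹ * (f (x s) - f xstar) =
        (((η s) ^ (k - 1))⁻¹ * ((η s) ^ 2)⁻¹ / 2) *
          ((D s - D (s + 1) + (η s) ^ 2 * L ^ 2) - 2 * (η s) * (f (x s) - f xstar)) := by
      field_simp
    rw [key]
    have hkp : 0 ≤ ((η s) ^ (k - 1))⁻¹ * ((η s) ^ 2)⁻¹ / 2 := by positivity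
    exact mul_nonneg hkp (by linarith)
  -- summation by parts bound
  have hsum1 : ∀ m, 1 ≤ m →
      ∑ s ∈ Finset.Icc 1 m, ((η s) ^ (k + 1))⁻¹ * (D s - D (s + 1)) ≤
        ((η m) ^ (k + 1))⁻¹ * (R ^ 2 - D (m + 1)) := by
    intro m hm
    induction m, hm using Nat.le_induction with
    | base =>
      simp only [Finset.Icc_self, Finset.sum_singleton]
      have h1 : 0 < ((η 1) ^ (k + 1))⁻¹ := by
        have := Real.rpow_pos_of_pos (hη_pos 1 le_rfl) (k + 1); positivity
      have := hDR 1 le_rfl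
      nlinarith [h1]
    | succ m hm ih =>
      rw [Finset.sum_Icc_succ_top (by omega)]
      have hmono : ((η m) ^ (k + 1))⁻¹ ≤ ((η (m + 1)) ^ (k + 1))⁻¹ := by
        have h1 : (η (m + 1)) ^ (k + 1) ≤ (η m) ^ (k + 1) :=
          Real.rpow_le_rpow (hη_pos (m + 1) (by omega)).le (hη_mono m hm) (by linarith)
        exact inv_anti₀ (Real.rpow_pos_of_pos (hη_pos (m + 1) (by omega)) _) h1
      have hpos : 0 < ((η (m + 1)) ^ (k + 1))⁻¹ := by
        have := Real.rpow_pos_of_pos (hη_pos (m + 1) (by omega)) (k + 1); positivity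
      have hdm1 := hDR (m + 1) (by omega)
      have hd2 := hDnonneg (m + 2)
      nlinarith [ih, hdm1, hd2, hpos, hmono]
  -- combine: weighted sum of gaps
  have hsum2 : ∑ s ∈ Finset.Icc 1 t, ((η s) ^ k)⁻¹ * (f (x s) - f xstar) ≤
      (R ^ 2 * ((η t) ^ (k + 1))⁻¹ + L ^ 2 * ∑ s ∈ Finset.Icc 1 t, ((η s) ^ (k - 1))⁻¹) / 2 := by
    calc ∑ s ∈ Finset.Icc 1 t, ((η s) ^ k)⁻¹ * (f (x s) - f xstar)
        ≤ ∑ s ∈ Finset.Icc 1 t,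
            ((((η s) ^ (k + 1))⁻¹ * (D s - D (s + 1)) + L ^ 2 * ((η s) ^ (k - 1))⁻¹) / 2) := by
          refine Finset.sum_le_sum fun s hs => ?_
          exact hstep s (Finset.mem_Icc.mp hs).1
      _ = ((∑ s ∈ Finset.Icc 1 t, ((η s) ^ (k + 1))⁻¹ * (D s - D (s + 1))) +
            L ^ 2 * ∑ s ∈ Finset.Icc 1 t, ((η s) ^ (k - 1))⁻¹) / 2 := by
          rw [Finset.mul_sum, ← Finset.sum_add_distrib, Finset.sum_div]
      _ ≤ (((η t) ^ (k + 1))⁻¹ * (R ^ 2 - D (t + 1)) +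
            L ^ 2 * ∑ s ∈ Finset.Icc 1 t, ((η s) ^ (k - 1))⁻¹) / 2 := by
          have := hsum1 t ht
          linarith
      _ ≤ (R ^ 2 * ((η t) ^ (k + 1))⁻¹ + L ^ 2 * ∑ s ∈ Finset.Icc 1 t, ((η s) ^ (k - 1))⁻¹) / 2 := by
          have h1 : 0 < ((η t) ^ (k + 1))⁻¹ := by
            have := Real.rpow_pos_of_pos (hη_pos t ht) (k + 1); positivity
          have h2 := hDnonneg (t + 1)
          nlinarith
  -- total weight
  have hwpos : ∀ s ∈ Finset.Icc 1 t, 0 < ((η s) ^ k)⁻¹ := by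
    intro s hs
    have := Real.rpow_pos_of_pos (hη_pos s (Finset.mem_Icc.mp hs).1) k
    positivity
  have hWpos : 0 < ∑ s ∈ Finset.Icc 1 t, ((η s) ^ k)⁻¹ :=
    Finset.sum_pos hwpos (by simp [Finset.nonempty_Icc]; omega)
  -- Jensen
  have hjensen : f ((∑ s ∈ Finset.Icc 1 t, ((η s) ^ k)⁻¹)⁻¹ •
      ∑ s ∈ Finset.Icc 1 t, ((η s) ^ k)⁻¹ • x s) ≤
      (∑ s ∈ Finset.Icc 1 t, ((η s) ^ k)⁻¹)⁻¹ *
        ∑ s ∈ Finset.Icc 1 t, ((η s) ^ k)⁻¹ * f (x s) := by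
    have := hf.map_centerMass_le (fun s hs => (hwpos s hs).le) hWpos
      (fun s hs => hxmem s (Finset.mem_Icc.mp hs).1)
    simp only [Finset.centerMass, Function.comp, smul_eq_mul, Finset.mul_sum] at this
    simpa [Finset.mul_sum] using this
  -- conclusion
  set W := ∑ s ∈ Finset.Icc 1 t, ((η s) ^ k)⁻¹ with hW
  have hgap : W⁻¹ * (∑ s ∈ Finset.Icc 1 t, ((η s) ^ k)⁻¹ * f (x s)) - f xstar =
      W⁻¹ * ∑ s ∈ Finset.Icc 1 t, ((η s) ^ k)⁻¹ * (f (x s) - f xstar) := by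
    have h1 : ∑ s ∈ Finset.Icc 1 t, ((η s) ^ k)⁻¹ * (f (x s) - f xstar) =
        (∑ s ∈ Finset.Icc 1 t, ((η s) ^ k)⁻¹ * f (x s)) - W * f xstar := by
      rw [hW, Finset.sum_mul]
      rw [← Finset.sum_sub_distrib]
      refine Finset.sum_congr rfl fun s hs => by ring
    rw [h1, mul_sub, ← mul_assoc, inv_mul_cancel₀ hWpos.ne', one_mul]
  have hfinal : W⁻¹ * ∑ s ∈ Finset.Icc 1 t, ((η s) ^ k)⁻¹ * (f (x s) - f xstar) ≤
      (R ^ 2 / (η t) ^ (k + 1) + L ^ 2 * ∑ s ∈ Finset.Icc 1 t, ((η s) ^ (k - 1))⁻¹) / (2 * W) := by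
    have hη2 : ((η t) ^ (k + 1)) ≠ 0 := (Real.rpow_pos_of_pos (hη_pos t ht) _).ne'
    have heq : (R ^ 2 / (η t) ^ (k + 1) +
          L ^ 2 * ∑ s ∈ Finset.Icc 1 t, ((η s) ^ (k - 1))⁻¹) / (2 * W) =
        (R ^ 2 * ((η t) ^ (k + 1))⁻¹ +
          L ^ 2 * ∑ s ∈ Finset.Icc 1 t, ((η s) ^ (k - 1))⁻¹) * (2⁻¹ * W⁻¹) := by
      field_simp
      try ring
    rw [heq]
    have h1 : W⁻¹ * ∑ s ∈ Finset.Icc 1 t, ((η s) ^ k)⁻¹ * (f (x s) - f xstar) ≤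
        W⁻¹ * ((R ^ 2 * ((η t) ^ (k + 1))⁻¹ +
          L ^ 2 * ∑ s ∈ Finset.Icc 1 t, ((η s) ^ (k - 1))⁻¹) / 2) :=
      mul_le_mul_of_nonneg_left hsum2 (by positivity)
    calc W⁻¹ * ∑ s ∈ Finset.Icc 1 t, ((η s) ^ k)⁻¹ * (f (x s) - f xstar)
        ≤ W⁻¹ * ((R ^ 2 * ((η t) ^ (k + 1))⁻¹ +
            L ^ 2 * ∑ s ∈ Finset.Icc 1 t, ((η s) ^ (k - 1))⁻¹) / 2) := h1
      _ = (R ^ 2 * ((η t) ^ (k + 1))⁻¹ +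
            L ^ 2 * ∑ s ∈ Finset.Icc 1 t, ((η s) ^ (k - 1))⁻¹) * (2⁻¹ * W⁻¹) := by ring
  have := hjensen
  linarith [hgap ▸ hfinal, sub_le_sub_right hjensen (f xstar)]
end

section
/- Sub-optimal rate for the ergodic average weighted by step-sizes (k = -1): Under the PSG setting with 𝒳 ⊆ B(x*, R), f convex and L-Lipschitz, and η_s = R/(L√s), the step-size-weighted average satisfies f( (Σ_{s=1}^t x_s/√s) / (Σ_{s=1}^t 1/√s) ) - f(x*) ≤ (2RL + RL·log t) / (4(√(t+1) - 1)). -/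
open Finset
open scoped RealInnerProductSpace

private lemma harmonic_le (t : ℕ) (ht : 1 ≤ t) :
    ∑ s ∈ Finset.Icc 1 t, ((s : ℝ))⁻¹ ≤ 1 + Real.log t := by
  induction t, ht using Nat.le_induction with
  | base => simp
  | succ t ht ih =>
    rw [Finset.sum_Icc_succ_top (by omega)]
    have h1 : (0:ℝ) < t := by exact_mod_cast ht
    have h2 : Real.log ((t:ℝ) / (t+1)) ≤ (t:ℝ)/(t+1) - 1 :=
      Real.log_le_sub_one_of_pos (by positivity)
    rw [Real.log_div (by positivity) (by positivity)] at h2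
    have h3 : ((t:ℝ))/(t+1) - 1 = -((t:ℝ)+1)⁻¹ := by field_simp; ring
    have : ((t+1:ℕ):ℝ) = (t:ℝ) + 1 := by push_cast; ring
    rw [this] at *
    nlinarith [ih]

private lemma sqrt_sum_ge (t : ℕ) (ht : 1 ≤ t) :
    2 * (Real.sqrt (t + 1) - 1) ≤ ∑ s ∈ Finset.Icc 1 t, (Real.sqrt s)⁻¹ := by
  induction t, ht using Nat.le_induction with
  | base =>
    simp only [Finset.Icc_self, Finset.sum_singleton, Nat.cast_one, Real.sqrt_one, inv_one]
    nlinarith [Real.sq_sqrt (by norm_num : (0:ℝ) ≤ 1+1), Real.sqrt_nonneg (1+1:ℝ),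
      sq_nonneg (Real.sqrt (1+1:ℝ) - 3/2)]
  | succ t ht ih =>
    rw [Finset.sum_Icc_succ_top (by omega)]
    push_cast
    have h1 : (1:ℝ) ≤ t := by exact_mod_cast ht
    set a := Real.sqrt ((t:ℝ)+1) with ha
    set b := Real.sqrt ((t:ℝ)+1+1) with hb
    have ha2 : a^2 = (t:ℝ)+1 := Real.sq_sqrt (by positivity)
    have hb2 : b^2 = (t:ℝ)+1+1 := Real.sq_sqrt (by positivity)
    have ha0 : 0 ≤ a := Real.sqrt_nonneg _
    have ha1 : 1 ≤ a := by nlinarith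
    have hb0 : 0 ≤ b := Real.sqrt_nonneg _
    have key : 2 * (b - a) ≤ a⁻¹ := by
      rw [show a⁻¹ = 1/a from (one_div a).symm, le_div_iff₀ (by linarith : (0:ℝ) < a)]
      nlinarith [sq_nonneg (a - b)]
    linarith [ih]

set_option maxHeartbeats 1000000 in
theorem stmt_9 {n : ℕ} (𝒳 : Set (EuclideanSpace ℝ (Fin n)))
    (hcompact : IsCompact 𝒳) (hconvex : Convex ℝ 𝒳)
    (f : EuclideanSpace ℝ (Fin n) → ℝ) (hf : ConvexOn ℝ 𝒳 f)
    (xstar : EuclideanSpace ℝ (Fin n)) (R L : ℝ) (hR : 0 < R) (hL : 0 < L)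
    (hball : 𝒳 ⊆ Metric.closedBall xstar R)
    (hxstar : xstar ∈ 𝒳) (hmin : ∀ z ∈ 𝒳, f xstar ≤ f z)
    (η : ℕ → ℝ) (hη : ∀ s, 1 ≤ s → η s = R / (L * Real.sqrt s))
    (x g : ℕ → EuclideanSpace ℝ (Fin n))
    (hx1 : x 1 ∈ 𝒳)
    (hsub : ∀ s, 1 ≤ s → ∀ z ∈ 𝒳, f (x s) + ⟪g s, z - x s⟫ ≤ f z)
    (hg : ∀ s, 1 ≤ s → ‖g s‖ ≤ L)
    (hmem : ∀ s, 1 ≤ s → x (s + 1) ∈ 𝒳)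
    (hproj : ∀ s, 1 ≤ s → ∀ z ∈ 𝒳,
      ‖x (s + 1) - (x s - η s • g s)‖ ≤ ‖z - (x s - η s • g s)‖)
    (t : ℕ) (ht : 1 ≤ t) :
    f ((∑ s ∈ Finset.Icc 1 t, (Real.sqrt s)⁻¹)⁻¹ •
        ∑ s ∈ Finset.Icc 1 t, (Real.sqrt s)⁻¹ • x s) - f xstar ≤
      (2 * R * L + R * L * Real.log t) / (4 * (Real.sqrt (t + 1) - 1)) := by
  -- membership of iterates
  have hxs : ∀ s : ℕ, 1 ≤ s → x s ∈ 𝒳 := by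
    intro s hs
    induction s, hs using Nat.le_induction with
    | base => exact hx1
    | succ s hs _ => exact hmem s hs
  -- positivity of step sizes
  have hsqrtpos : ∀ s : ℕ, 1 ≤ s → (0:ℝ) < Real.sqrt s := by
    intro s hs
    have : (0:ℝ) < s := by exact_mod_cast hs
    exact Real.sqrt_pos.2 this
  have hηpos : ∀ s : ℕ, 1 ≤ s → 0 < η s := by
    intro s hs
    rw [hη s hs]
    exact div_pos hR (mul_pos hL (hsqrtpos s hs))
  -- per-step inequality
  have key : ∀ s : ℕ, 1 ≤ s → η s * (f (x s) - f xstar) ≤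
      (‖x s - xstar‖^2 - ‖x (s+1) - xstar‖^2)/2 + (η s)^2 * L^2 / 2 := by
    intro s hs
    set y := x s - η s • g s with hy
    have hmem' := hmem s hs
    haveI : Nonempty 𝒳 := ⟨⟨xstar, hxstar⟩⟩
    have hiInf : ‖y - x (s+1)‖ = ⨅ w : 𝒳, ‖y - (w : EuclideanSpace ℝ (Fin n))‖ := by
      apply le_antisymm
      · apply le_ciInf
        rintro ⟨z, hz⟩
        rw [norm_sub_rev y, norm_sub_rev y]
        exact hproj s hs z hz
      · have hbdd : BddBelow (Set.range fun w : 𝒳 => ‖y - (w : EuclideanSpace ℝ (Fin n))‖) := by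
          refine ⟨0, ?_⟩
          rintro _ ⟨z, rfl⟩
          exact norm_nonneg _
        exact ciInf_le hbdd (⟨x (s+1), hmem'⟩ : 𝒳)
    have hobt := (norm_eq_iInf_iff_real_inner_le_zero hconvex hmem').1 hiInf xstar hxstar
    have h1 : ‖x (s+1) - xstar‖^2 ≤ ‖y - xstar‖^2 := by
      have expand : ‖y - xstar‖^2 = ‖(y - x (s+1)) - (xstar - x (s+1))‖^2 := by
        congr 1; abel_nf
      rw [expand]
      have e2 := norm_sub_sq_real (y - x (s+1)) (xstar - x (s+1))
      rw [e2]
      have e3 : ‖xstar - x (s+1)‖^2 = ‖x (s+1) - xstar‖^2 := by rw [norm_sub_rev]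
      linarith [hobt, sq_nonneg ‖y - x (s+1)‖, e3]
    have h2 : ‖y - xstar‖^2 = ‖x s - xstar‖^2 - 2*(η s)*⟪g s, x s - xstar⟫
        + (η s)^2 * ‖g s‖^2 := by
      have hyx : y - xstar = (x s - xstar) - η s • g s := by rw [hy]; abel
      rw [hyx, norm_sub_sq_real, real_inner_smul_right, real_inner_comm, norm_smul]
      rw [mul_pow, Real.norm_eq_abs, sq_abs]
      ring
    have h3 : f (x s) - f xstar ≤ ⟪g s, x s - xstar⟫ := by
      have hsb := hsub s hs xstar hxstar
      have : ⟪g s, xstar - x s⟫ = -⟪g s, x s - xstar⟫ := by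
        rw [← inner_neg_right]; congr 1; abel
      linarith [hsb, this.le, this.ge]
    have h4 : ‖g s‖^2 ≤ L^2 := by nlinarith [hg s hs, norm_nonneg (g s)]
    have hηp := hηpos s hs
    nlinarith [mul_le_mul_of_nonneg_left h3 hηp.le, sq_nonneg (η s)]
  -- telescoping
  have htel : ∑ s ∈ Finset.Icc 1 t, (‖x s - xstar‖^2 - ‖x (s+1) - xstar‖^2)
      = ‖x 1 - xstar‖^2 - ‖x (t+1) - xstar‖^2 := by
    rw [← Finset.Ico_add_one_right_eq_Icc, Finset.sum_Ico_eq_sum_range, Nat.add_sub_cancel]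
    have h := Finset.sum_range_sub' (fun k => ‖x (1+k) - xstar‖^2) t
    simpa [Nat.add_comm] using h
  have hD1 : ‖x 1 - xstar‖^2 ≤ R^2 := by
    have := hball hx1
    rw [Metric.mem_closedBall, dist_eq_norm] at this
    nlinarith [norm_nonneg (x 1 - xstar)]
  have hη2 : ∀ s : ℕ, 1 ≤ s → (η s)^2 * L^2 / 2 = R^2/2 * ((s:ℝ))⁻¹ := by
    intro s hs
    rw [hη s hs]
    have hs0 : (0:ℝ) < s := by exact_mod_cast hs
    rw [div_pow, mul_pow, Real.sq_sqrt hs0.le]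
    field_simp
  have hsum : ∑ s ∈ Finset.Icc 1 t, η s * (f (x s) - f xstar)
      ≤ R^2/2 * (2 + Real.log t) := by
    calc ∑ s ∈ Finset.Icc 1 t, η s * (f (x s) - f xstar)
        ≤ ∑ s ∈ Finset.Icc 1 t,
          ((‖x s - xstar‖^2 - ‖x (s+1) - xstar‖^2)/2 + (η s)^2 * L^2 / 2) := by
          apply Finset.sum_le_sum
          intro s hsmem
          exact key s (Finset.mem_Icc.1 hsmem).1
      _ = (‖x 1 - xstar‖^2 - ‖x (t+1) - xstar‖^2)/2
          + ∑ s ∈ Finset.Icc 1 t, R^2/2 * ((s:ℝ))⁻¹ := by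
          rw [Finset.sum_add_distrib, ← Finset.sum_div, htel]
          congr 1
          apply Finset.sum_congr rfl
          intro s hsmem
          exact hη2 s (Finset.mem_Icc.1 hsmem).1
      _ ≤ R^2/2 + R^2/2 * (1 + Real.log t) := by
          rw [← Finset.mul_sum]
          have hh := harmonic_le t ht
          have := sq_nonneg ‖x (t+1) - xstar‖
          nlinarith [hD1]
      _ = R^2/2 * (2 + Real.log t) := by ring
  -- weights
  set w : ℕ → ℝ := fun s => (Real.sqrt s)⁻¹ with hw
  set W : ℝ := ∑ s ∈ Finset.Icc 1 t, w s with hW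
  have hWpos : 0 < W := by
    apply Finset.sum_pos
    · intro s hsmem
      exact inv_pos.2 (hsqrtpos s (Finset.mem_Icc.1 hsmem).1)
    · exact ⟨1, Finset.mem_Icc.2 ⟨le_refl 1, ht⟩⟩
  have hwη : ∀ s : ℕ, 1 ≤ s → η s = (R/L) * w s := by
    intro s hs
    rw [hη s hs, hw]
    field_simp
  -- Jensen
  have hwsum1 : ∑ s ∈ Finset.Icc 1 t, W⁻¹ * w s = 1 := by
    rw [← Finset.mul_sum, ← hW, inv_mul_cancel₀ hWpos.ne']
  have hjensen : f (W⁻¹ • ∑ s ∈ Finset.Icc 1 t, w s • x s)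
      ≤ ∑ s ∈ Finset.Icc 1 t, (W⁻¹ * w s) * f (x s) := by
    have hpt : W⁻¹ • ∑ s ∈ Finset.Icc 1 t, w s • x s
        = ∑ s ∈ Finset.Icc 1 t, (W⁻¹ * w s) • x s := by
      rw [Finset.smul_sum]
      apply Finset.sum_congr rfl
      intro s _
      rw [smul_smul]
    rw [hpt]
    exact hf.map_sum_le
      (fun s hsmem => mul_nonneg (inv_nonneg.2 hWpos.le)
        (inv_nonneg.2 (Real.sqrt_nonneg _)))
      hwsum1
      (fun s hsmem => hxs s (Finset.mem_Icc.1 hsmem).1)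
  have hstep : f (W⁻¹ • ∑ s ∈ Finset.Icc 1 t, w s • x s) - f xstar
      ≤ W⁻¹ * ∑ s ∈ Finset.Icc 1 t, w s * (f (x s) - f xstar) := by
    have hsplit : ∑ s ∈ Finset.Icc 1 t, w s * (f (x s) - f xstar)
        = (∑ s ∈ Finset.Icc 1 t, w s * f (x s)) - W * f xstar := by
      simp only [mul_sub]
      rw [Finset.sum_sub_distrib, ← Finset.sum_mul]
    have e1 : ∑ s ∈ Finset.Icc 1 t, (W⁻¹ * w s) * f (x s)
        = W⁻¹ * ∑ s ∈ Finset.Icc 1 t, w s * f (x s) := by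
      rw [Finset.mul_sum]
      apply Finset.sum_congr rfl
      intro s _
      ring
    have e2 : W⁻¹ * ∑ s ∈ Finset.Icc 1 t, w s * (f (x s) - f xstar)
        = W⁻¹ * ∑ s ∈ Finset.Icc 1 t, w s * f (x s) - f xstar := by
      rw [hsplit, mul_sub, ← mul_assoc, inv_mul_cancel₀ hWpos.ne', one_mul]
    linarith [hjensen, e1.le, e1.ge, e2.le, e2.ge]
  have hwfsum : ∑ s ∈ Finset.Icc 1 t, w s * (f (x s) - f xstar)
      ≤ (L/R) * (R^2/2 * (2 + Real.log t)) := by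
    have heq : ∑ s ∈ Finset.Icc 1 t, w s * (f (x s) - f xstar)
        = (L/R) * ∑ s ∈ Finset.Icc 1 t, η s * (f (x s) - f xstar) := by
      rw [Finset.mul_sum]
      apply Finset.sum_congr rfl
      intro s hsmem
      rw [hwη s (Finset.mem_Icc.1 hsmem).1]
      field_simp
    rw [heq]
    exact mul_le_mul_of_nonneg_left hsum (by positivity)
  -- final assembly
  have hlog : 0 ≤ Real.log t := Real.log_nonneg (by exact_mod_cast ht)
  have hN : (0:ℝ) ≤ R*L/2 * (2 + Real.log t) := by positivity
  have hsq : 1 < Real.sqrt ((t:ℝ) + 1) := by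
    have h1t : (1:ℝ) ≤ t := by exact_mod_cast ht
    nlinarith [Real.sq_sqrt (show (0:ℝ) ≤ (t:ℝ)+1 by positivity),
      Real.sqrt_nonneg ((t:ℝ)+1)]
  have hden : 0 < 2 * (Real.sqrt ((t:ℝ)+1) - 1) := by linarith
  have hWge : 2 * (Real.sqrt ((t:ℝ)+1) - 1) ≤ W := sqrt_sum_ge t ht
  calc f (W⁻¹ • ∑ s ∈ Finset.Icc 1 t, w s • x s) - f xstar
      ≤ W⁻¹ * ∑ s ∈ Finset.Icc 1 t, w s * (f (x s) - f xstar) := hstep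
    _ ≤ W⁻¹ * ((L/R) * (R^2/2 * (2 + Real.log t))) := by
        apply mul_le_mul_of_nonneg_left hwfsum (inv_nonneg.2 hWpos.le)
    _ = (R*L/2 * (2 + Real.log t)) / W := by
        rw [inv_mul_eq_div]
        congr 1
        field_simp
    _ ≤ (R*L/2 * (2 + Real.log t)) / (2 * (Real.sqrt ((t:ℝ)+1) - 1)) := by
        gcongr
    _ = (2 * R * L + R * L * Real.log t) / (4 * (Real.sqrt ((t:ℝ) + 1) - 1)) := by
        rw [div_eq_div_iff (by linarith) (by linarith)]
        ring
end

section
/- With η_s = R/(L√s) and any fixed k > -1, the k-weighted ergodic average of PSG converges at rate O(1/√t) without a log factor: specifically, f( (Σ_{s=1}^t s^{k/2} x_s)/(Σ_{s=1}^t s^{k/2}) ) - f(x*) ≤ C_k · RL/√t for a constant C_k depending only on k, for all t ≥ 1. -/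
open Finset
open scoped RealInnerProductSpace

lemma sum_rpow_upper (p : ℝ) (hp : -1 < p) :
    ∃ C : ℝ, 0 < C ∧ ∀ t : ℕ, 1 ≤ t →
      ∑ s ∈ Finset.Icc 1 t, (s : ℝ) ^ p ≤ C * (t : ℝ) ^ (p + 1) := by
  rcases le_or_gt 0 p with hp0 | hp0
  · refine ⟨1, one_pos, fun t ht => ?_⟩
    have ht0 : (0:ℝ) < t := by exact_mod_cast ht
    calc ∑ s ∈ Finset.Icc 1 t, (s : ℝ) ^ p
        ≤ ∑ s ∈ Finset.Icc 1 t, (t : ℝ) ^ p := by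
          refine Finset.sum_le_sum fun s hs => ?_
          exact Real.rpow_le_rpow (Nat.cast_nonneg s)
            (by exact_mod_cast (Finset.mem_Icc.mp hs).2) hp0
      _ = (t : ℝ) * (t : ℝ) ^ p := by
          rw [Finset.sum_const, Nat.card_Icc]; simp [nsmul_eq_mul]
      _ = 1 * (t : ℝ) ^ (p + 1) := by
          rw [one_mul, Real.rpow_add ht0, Real.rpow_one]; ring
  · have hp1 : (0:ℝ) < p + 1 := by linarith
    refine ⟨1 + 1 / (p + 1), by positivity, fun t ht => ?_⟩
    have ht0 : (0:ℝ) < t := by exact_mod_cast ht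
    have ht1 : (1:ℝ) ≤ (t:ℝ) ^ (p + 1) :=
      Real.one_le_rpow (by exact_mod_cast ht) hp1.le
    have hcast : (1:ℝ) + ((t - 1 : ℕ) : ℝ) = (t : ℝ) := by
      have : ((t - 1 : ℕ) : ℝ) = (t:ℝ) - 1 := by
        push_cast [Nat.cast_sub ht]; ring
      rw [this]; ring
    have hsplit : Finset.Icc 1 t = insert 1 (Finset.Icc 2 t) := by
      ext a; simp only [Finset.mem_Icc, Finset.mem_insert]; omega
    have hanti : AntitoneOn (fun x : ℝ => x ^ p)
        (Set.Icc (1:ℝ) (1 + (t - 1 : ℕ))) := by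
      intro a ha b hb hab
      exact Real.rpow_le_rpow_of_nonpos (lt_of_lt_of_le one_pos ha.1) hab hp0.le
    have hint := hanti.sum_le_integral
    have hval : ∫ x in (1:ℝ)..(1 + (t - 1 : ℕ)), x ^ p
        = ((t:ℝ) ^ (p+1) - 1) / (p + 1) := by
      rw [integral_rpow (Or.inl hp), hcast, Real.one_rpow]
    have hre : ∑ s ∈ Finset.Icc 2 t, (s : ℝ) ^ p
        = ∑ i ∈ Finset.range (t - 1), ((1:ℝ) + ((i + 1 : ℕ):ℝ)) ^ p := by
      rw [← Finset.Ico_add_one_right_eq_Icc, Finset.sum_Ico_eq_sum_range]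
      have : t + 1 - 2 = t - 1 := by omega
      rw [this]
      refine Finset.sum_congr rfl fun i _ => ?_
      push_cast; ring_nf
    rw [hsplit, Finset.sum_insert (by simp), hre]
    have h2 : ∑ i ∈ Finset.range (t - 1), ((1:ℝ) + ((i + 1 : ℕ):ℝ)) ^ p
        ≤ ((t:ℝ) ^ (p+1) - 1) / (p + 1) := by
      rw [← hval]; exact hint
    have h1 : ((1:ℕ):ℝ) ^ p = 1 := by norm_num
    rw [h1]
    have h3 : ((t:ℝ) ^ (p+1) - 1) / (p + 1) ≤ (1 / (p+1)) * (t:ℝ) ^ (p+1) := by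
      rw [one_div, inv_mul_eq_div]
      gcongr
      linarith
    have hexp : (1 + 1/(p+1)) * (t:ℝ)^(p+1) = (t:ℝ)^(p+1) + 1/(p+1) * (t:ℝ)^(p+1) := by ring
    linarith [h2.trans h3]

lemma sum_rpow_lower (p : ℝ) (hp : -1 < p) :
    ∃ c : ℝ, 0 < c ∧ ∀ t : ℕ, 1 ≤ t →
      c * (t : ℝ) ^ (p + 1) ≤ ∑ s ∈ Finset.Icc 1 t, (s : ℝ) ^ p := by
  rcases le_or_gt p 0 with hp0 | hp0
  · refine ⟨1, one_pos, fun t ht => ?_⟩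
    have ht0 : (0:ℝ) < t := by exact_mod_cast ht
    calc (1:ℝ) * (t:ℝ) ^ (p+1) = (t : ℝ) * (t : ℝ) ^ p := by
          rw [one_mul, Real.rpow_add ht0, Real.rpow_one]; ring
      _ = ∑ s ∈ Finset.Icc 1 t, (t : ℝ) ^ p := by
          rw [Finset.sum_const, Nat.card_Icc]; simp [nsmul_eq_mul]
      _ ≤ ∑ s ∈ Finset.Icc 1 t, (s : ℝ) ^ p := by
          refine Finset.sum_le_sum fun s hs => ?_
          have hs1 : 1 ≤ s := (Finset.mem_Icc.mp hs).1
          exact Real.rpow_le_rpow_of_nonpos (by exact_mod_cast hs1)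
            (by exact_mod_cast (Finset.mem_Icc.mp hs).2) hp0
  · have hp1 : (0:ℝ) < p + 1 := by linarith
    refine ⟨1 / (p + 1), by positivity, fun t ht => ?_⟩
    have ht0 : (0:ℝ) < t := by exact_mod_cast ht
    have hmono : MonotoneOn (fun x : ℝ => x ^ p) (Set.Icc (0:ℝ) (0 + t)) := by
      intro a ha b hb hab
      exact Real.rpow_le_rpow ha.1 hab hp0.le
    have hint := hmono.integral_le_sum
    have hval : ∫ x in (0:ℝ)..(0 + (t:ℕ)), x ^ p = (t:ℝ) ^ (p+1) / (p + 1) := by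
      rw [integral_rpow (Or.inl hp)]
      rw [Real.zero_rpow (by positivity)]
      norm_num
    have hre : ∑ i ∈ Finset.range t, ((0:ℝ) + ((i + 1 : ℕ):ℝ)) ^ p
        = ∑ s ∈ Finset.Icc 1 t, (s : ℝ) ^ p := by
      rw [← Finset.Ico_add_one_right_eq_Icc, Finset.sum_Ico_eq_sum_range]
      have : t + 1 - 1 = t := by omega
      rw [this]
      refine Finset.sum_congr rfl fun i _ => ?_
      push_cast; ring_nf
    rw [div_mul_eq_mul_div, one_mul, ← hval]
    calc (∫ x in (0:ℝ)..(0 + (t:ℕ)), x ^ p) ≤ _ := hint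
      _ = _ := hre

lemma proj_closer {n : ℕ} {𝒳 : Set (EuclideanSpace ℝ (Fin n))} (hconv : Convex ℝ 𝒳)
    {q v : EuclideanSpace ℝ (Fin n)} (hv : v ∈ 𝒳)
    (hmin : ∀ z ∈ 𝒳, ‖v - q‖ ≤ ‖z - q‖) {z : EuclideanSpace ℝ (Fin n)} (hz : z ∈ 𝒳) :
    ‖z - v‖ ^ 2 ≤ ‖z - q‖ ^ 2 := by
  have hbdd : BddBelow (Set.range fun w : 𝒳 => ‖q - (w : EuclideanSpace ℝ (Fin n))‖) := by
    refine ⟨0, ?_⟩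
    rintro _ ⟨w, rfl⟩
    exact norm_nonneg _
  haveI : Nonempty 𝒳 := ⟨⟨v, hv⟩⟩
  have heq : ‖q - v‖ = ⨅ w : 𝒳, ‖q - (w : EuclideanSpace ℝ (Fin n))‖ := by
    refine le_antisymm (le_ciInf fun w => ?_) (ciInf_le hbdd ⟨v, hv⟩)
    rw [norm_sub_rev q, norm_sub_rev q]
    exact hmin w w.2
  have hvar : ∀ w ∈ 𝒳, ⟪q - v, w - v⟫ ≤ 0 :=
    (norm_eq_iInf_iff_real_inner_le_zero hconv hv).mp heq
  have hzv := hvar z hz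
  have hexp : ‖z - q‖ ^ 2 = ‖z - v‖ ^ 2 + 2 * ⟪z - v, v - q⟫ + ‖v - q‖ ^ 2 := by
    have : z - q = (z - v) + (v - q) := by abel
    rw [this, norm_add_sq_real]
  have hip : ⟪z - v, v - q⟫ = -⟪q - v, z - v⟫ := by
    rw [real_inner_comm, ← inner_neg_left]
    congr 1; abel
  nlinarith [sq_nonneg ‖v - q‖]

lemma descent_step {n : ℕ} {𝒳 : Set (EuclideanSpace ℝ (Fin n))} (hconv : Convex ℝ 𝒳)
    {f : EuclideanSpace ℝ (Fin n) → ℝ} {xstar xs xn gs : EuclideanSpace ℝ (Fin n)}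
    {e L : ℝ} (he : 0 < e) (hL : 0 < L)
    (hxstar : xstar ∈ 𝒳) (hxn : xn ∈ 𝒳)
    (hsub : f xs + ⟪gs, xstar - xs⟫ ≤ f xstar)
    (hg : ‖gs‖ ≤ L)
    (hproj : ∀ z ∈ 𝒳, ‖xn - (xs - e • gs)‖ ≤ ‖z - (xs - e • gs)‖) :
    ‖xn - xstar‖ ^ 2 ≤ ‖xs - xstar‖ ^ 2 - 2 * e * (f xs - f xstar) + e ^ 2 * L ^ 2 := by
  have h1 : ‖xstar - xn‖ ^ 2 ≤ ‖xstar - (xs - e • gs)‖ ^ 2 :=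
    proj_closer hconv hxn hproj hxstar
  have hexp : ‖xstar - (xs - e • gs)‖ ^ 2
      = ‖xstar - xs‖ ^ 2 + 2 * (e * ⟪xstar - xs, gs⟫) + e ^ 2 * ‖gs‖ ^ 2 := by
    have h : xstar - (xs - e • gs) = (xstar - xs) + e • gs := by abel
    rw [h, norm_add_sq_real, real_inner_smul_right, norm_smul]
    simp [abs_of_pos he]
    ring
  have hip : ⟪xstar - xs, gs⟫ ≤ f xstar - f xs := by
    rw [real_inner_comm]
    linarith [hsub]
  have hg2 : ‖gs‖ ^ 2 ≤ L ^ 2 := by nlinarith [norm_nonneg gs]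
  have h2 : e * ⟪xstar - xs, gs⟫ ≤ e * (f xstar - f xs) :=
    mul_le_mul_of_nonneg_left hip he.le
  have e1 : ‖xstar - xn‖ ^ 2 = ‖xn - xstar‖ ^ 2 := by rw [norm_sub_rev]
  have e2 : ‖xstar - xs‖ ^ 2 = ‖xs - xstar‖ ^ 2 := by rw [norm_sub_rev]
  have e3 : e ^ 2 * ‖gs‖ ^ 2 ≤ e ^ 2 * L ^ 2 :=
    mul_le_mul_of_nonneg_left hg2 (sq_nonneg e)
  linarith [h1, hexp, e1, e2, h2, e3]

set_option maxHeartbeats 1000000 in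
theorem stmt_14 (k : ℝ) (hk : -1 < k) :
    ∃ C : ℝ, 0 < C ∧
      ∀ (n : ℕ) (𝒳 : Set (EuclideanSpace ℝ (Fin n))),
        IsCompact 𝒳 → Convex ℝ 𝒳 →
        ∀ (f : EuclideanSpace ℝ (Fin n) → ℝ), ConvexOn ℝ 𝒳 f →
        ∀ (xstar : EuclideanSpace ℝ (Fin n)) (R L : ℝ), 0 < R → 0 < L →
        𝒳 ⊆ Metric.closedBall xstar R →
        xstar ∈ 𝒳 → (∀ z ∈ 𝒳, f xstar ≤ f z) →
        ∀ (η : ℕ → ℝ), (∀ s, 1 ≤ s → η s = R / (L * Real.sqrt s)) →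
        ∀ (x g : ℕ → EuclideanSpace ℝ (Fin n)),
        x 1 ∈ 𝒳 →
        (∀ s, 1 ≤ s → ∀ z ∈ 𝒳, f (x s) + ⟪g s, z - x s⟫ ≤ f z) →
        (∀ s, 1 ≤ s → ‖g s‖ ≤ L) →
        (∀ s, 1 ≤ s → x (s + 1) ∈ 𝒳) →
        (∀ s, 1 ≤ s → ∀ z ∈ 𝒳,
          ‖x (s + 1) - (x s - η s • g s)‖ ≤ ‖z - (x s - η s • g s)‖) →
        ∀ t : ℕ, 1 ≤ t →
          f ((∑ s ∈ Finset.Icc 1 t, ((s : ℝ) ^ (k / 2)))⁻¹ •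
              ∑ s ∈ Finset.Icc 1 t, ((s : ℝ) ^ (k / 2)) • x s) - f xstar ≤
            C * R * L / Real.sqrt t := by
  obtain ⟨C₁, hC₁, hUp⟩ := sum_rpow_upper ((k - 1) / 2) (by linarith)
  obtain ⟨c₂, hc₂, hLo⟩ := sum_rpow_lower (k / 2) (by linarith)
  refine ⟨(1 + C₁) / (2 * c₂), by positivity, ?_⟩
  intro n 𝒳 hcomp hconv f hf xstar R L hR hLpos hball hxstarm hfmin η hη x g hx1 hsub
    hgle hxmem hproj t ht
  have hxm : ∀ s : ℕ, 1 ≤ s → x s ∈ 𝒳 := by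
    intro s hs
    induction s, hs using Nat.le_induction with
    | base => exact hx1
    | succ m hm _ => exact hxmem m hm
  have hspos : ∀ s : ℕ, 1 ≤ s → (0:ℝ) < s := fun s hs => by exact_mod_cast hs
  have hDle : ∀ s : ℕ, 1 ≤ s → ‖x s - xstar‖ ^ 2 ≤ R ^ 2 := by
    intro s hs
    have h := hball (hxm s hs)
    rw [Metric.mem_closedBall, dist_eq_norm] at h
    nlinarith [norm_nonneg (x s - xstar)]
  have hηpos : ∀ s : ℕ, 1 ≤ s → 0 < η s := by
    intro s hs
    rw [hη s hs]
    have h1 : (0:ℝ) < Real.sqrt s := Real.sqrt_pos.mpr (hspos s hs)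
    positivity
  set w : ℕ → ℝ := fun s => (s : ℝ) ^ (k / 2) with hwdef
  set a : ℕ → ℝ := fun s => L / (2 * R) * (s : ℝ) ^ ((k + 1) / 2) with hadef
  have hwpos : ∀ s : ℕ, 1 ≤ s → 0 < w s := fun s hs => Real.rpow_pos_of_pos (hspos s hs) _
  have hapos : ∀ s : ℕ, 1 ≤ s → 0 < a s := by
    intro s hs
    have h1 := Real.rpow_pos_of_pos (hspos s hs) ((k+1)/2)
    simp only [hadef]
    positivity
  have haw : ∀ s : ℕ, 1 ≤ s → a s * (2 * η s) = w s := by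
    intro s hs
    have hs0 := hspos s hs
    have hs2 : (0:ℝ) < (s:ℝ) ^ ((1:ℝ)/2) := Real.rpow_pos_of_pos hs0 _
    simp only [hadef, hwdef]
    rw [hη s hs, Real.sqrt_eq_rpow,
      show ((k+1)/2 : ℝ) = k/2 + 1/2 by ring, Real.rpow_add hs0]
    field_simp
  have hwη : ∀ s : ℕ, 1 ≤ s → w s * η s = R / L * (s:ℝ) ^ ((k-1)/2) := by
    intro s hs
    have hs0 := hspos s hs
    have hs2 : (0:ℝ) < (s:ℝ) ^ ((1:ℝ)/2) := Real.rpow_pos_of_pos hs0 _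
    simp only [hwdef]
    rw [hη s hs, Real.sqrt_eq_rpow,
      show ((k-1)/2 : ℝ) = k/2 - 1/2 by ring, Real.rpow_sub hs0]
    field_simp
  have hamono : ∀ s : ℕ, a s ≤ a (s + 1) := by
    intro s
    simp only [hadef]
    refine mul_le_mul_of_nonneg_left ?_ (by positivity)
    refine Real.rpow_le_rpow (Nat.cast_nonneg s) (by push_cast; linarith) (by linarith)
  have hstepW : ∀ s : ℕ, 1 ≤ s → w s * (f (x s) - f xstar)
      ≤ a s * (‖x s - xstar‖ ^ 2 - ‖x (s+1) - xstar‖ ^ 2) + w s * η s * L ^ 2 / 2 := by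
    intro s hs
    have hA := descent_step hconv (hηpos s hs) hLpos hxstarm (hxmem s hs)
      (hsub s hs xstar hxstarm) (hgle s hs) (hproj s hs)
    have hkey : a s * (η s) ^ 2 * L ^ 2 = w s * η s * L ^ 2 / 2 := by
      linear_combination (η s * L ^ 2 / 2) * haw s hs
    have hwF : w s * (f (x s) - f xstar) = a s * (2 * η s * (f (x s) - f xstar)) := by
      linear_combination (f (x s) - f xstar) * (haw s hs).symm
    have hmul := mul_le_mul_of_nonneg_left hA (hapos s hs).le
    nlinarith [hmul]
  have claimB : ∀ u : ℕ, 1 ≤ u →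
      ∑ s ∈ Finset.Icc 1 u, w s * (f (x s) - f xstar)
        ≤ a u * (R ^ 2 - ‖x (u+1) - xstar‖ ^ 2)
          + ∑ s ∈ Finset.Icc 1 u, w s * η s * L ^ 2 / 2 := by
    intro u hu
    induction u, hu using Nat.le_induction with
    | base =>
      simp only [Finset.Icc_self, Finset.sum_singleton]
      have h1 := hstepW 1 le_rfl
      have hD1 := hDle 1 le_rfl
      nlinarith [mul_nonneg (hapos 1 le_rfl).le (sub_nonneg.2 hD1)]
    | succ m hm ih =>
      rw [Finset.sum_Icc_succ_top (by omega : 1 ≤ m + 1),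
        Finset.sum_Icc_succ_top (by omega : 1 ≤ m + 1)]
      have hstep := hstepW (m+1) (by omega)
      have hDm := hDle (m+1) (by omega)
      have hmono := hamono m
      nlinarith [mul_nonneg (sub_nonneg.2 hmono) (sub_nonneg.2 hDm)]
  have ht0 : (0:ℝ) < t := hspos t ht
  -- numerator bound
  have hB := claimB t ht
  have hDrop : a t * (R ^ 2 - ‖x (t+1) - xstar‖ ^ 2) ≤ a t * R ^ 2 := by
    nlinarith [mul_nonneg (hapos t ht).le (sq_nonneg ‖x (t+1) - xstar‖)]
  have haR : a t * R ^ 2 = R * L / 2 * (t:ℝ) ^ ((k+1)/2) := by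
    simp only [hadef]
    field_simp
  have hsum2 : ∑ s ∈ Finset.Icc 1 t, w s * η s * L ^ 2 / 2
      = R * L / 2 * ∑ s ∈ Finset.Icc 1 t, (s:ℝ) ^ ((k-1)/2) := by
    rw [Finset.mul_sum]
    refine Finset.sum_congr rfl fun s hs => ?_
    rw [hwη s (Finset.mem_Icc.mp hs).1]
    field_simp
  have hup := hUp t ht
  rw [show (k-1)/2 + 1 = (k+1)/2 by ring] at hup
  have hN : ∑ s ∈ Finset.Icc 1 t, w s * (f (x s) - f xstar)
      ≤ R * L / 2 * (1 + C₁) * (t:ℝ) ^ ((k+1)/2) := by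
    have h5 : R * L / 2 * (∑ s ∈ Finset.Icc 1 t, (s:ℝ) ^ ((k-1)/2))
        ≤ R * L / 2 * (C₁ * (t:ℝ) ^ ((k+1)/2)) :=
      mul_le_mul_of_nonneg_left hup (by positivity)
    have hr : R * L / 2 * (1 + C₁) * (t:ℝ) ^ ((k+1)/2)
        = R * L / 2 * (t:ℝ) ^ ((k+1)/2) + R * L / 2 * (C₁ * (t:ℝ) ^ ((k+1)/2)) := by ring
    linarith [hB, hDrop, hsum2 ▸ h5]
  -- Jensen
  have hWpos : 0 < ∑ s ∈ Finset.Icc 1 t, w s :=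
    Finset.sum_pos (fun s hs => hwpos s (Finset.mem_Icc.mp hs).1)
      ⟨1, Finset.mem_Icc.mpr ⟨le_rfl, ht⟩⟩
  have hJ := hf.map_centerMass_le (t := Finset.Icc 1 t) (w := w) (p := x)
    (fun s hs => (hwpos s (Finset.mem_Icc.mp hs).1).le) hWpos
    (fun s hs => hxm s (Finset.mem_Icc.mp hs).1)
  have hcm2 : (Finset.Icc 1 t).centerMass w (f ∘ x)
      = (∑ s ∈ Finset.Icc 1 t, w s)⁻¹ * ∑ s ∈ Finset.Icc 1 t, w s * f (x s) := by
    simp [Finset.centerMass, smul_eq_mul]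
  rw [Finset.centerMass, hcm2] at hJ
  have hsplit : ∑ s ∈ Finset.Icc 1 t, w s * (f (x s) - f xstar)
      = (∑ s ∈ Finset.Icc 1 t, w s * f (x s))
        - (∑ s ∈ Finset.Icc 1 t, w s) * f xstar := by
    rw [Finset.sum_mul]
    rw [← Finset.sum_sub_distrib]
    exact Finset.sum_congr rfl fun s _ => by ring
  set W := ∑ s ∈ Finset.Icc 1 t, w s with hW
  set N := ∑ s ∈ Finset.Icc 1 t, w s * (f (x s) - f xstar) with hNdef
  have hfinal1 : f (W⁻¹ • ∑ s ∈ Finset.Icc 1 t, w s • x s) - f xstar ≤ W⁻¹ * N := by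
    have hWN : W⁻¹ * (N + W * f xstar) = W⁻¹ * N + f xstar := by
      field_simp
    have hsum : ∑ s ∈ Finset.Icc 1 t, w s * f (x s) = N + W * f xstar := by
      linarith [hsplit]
    rw [hsum] at hJ
    linarith [hJ, hWN.le]
  refine le_trans hfinal1 ?_
  -- from W⁻¹ N to the final bound
  have hlo := hLo t ht
  set T1 := (t:ℝ) ^ ((k+1)/2) with hT1
  have hT1pos : 0 < T1 := Real.rpow_pos_of_pos ht0 _
  have hT2pos : 0 < (t:ℝ) ^ (k/2 + 1) := Real.rpow_pos_of_pos ht0 _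
  have hNpos : 0 ≤ R * L / 2 * (1 + C₁) * T1 := by positivity
  have step1 : W⁻¹ * N ≤ W⁻¹ * (R * L / 2 * (1 + C₁) * T1) :=
    mul_le_mul_of_nonneg_left hN (by positivity)
  have step2 : W⁻¹ ≤ (c₂ * (t:ℝ) ^ (k/2 + 1))⁻¹ :=
    inv_anti₀ (by positivity) hlo
  have step3 : W⁻¹ * (R * L / 2 * (1 + C₁) * T1)
      ≤ (c₂ * (t:ℝ) ^ (k/2 + 1))⁻¹ * (R * L / 2 * (1 + C₁) * T1) :=
    mul_le_mul_of_nonneg_right step2 hNpos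
  have hfin : (c₂ * (t:ℝ) ^ (k/2 + 1))⁻¹ * (R * L / 2 * (1 + C₁) * T1)
      = (1 + C₁) / (2 * c₂) * R * L / Real.sqrt t := by
    have hsq : (0:ℝ) < (t:ℝ) ^ ((1:ℝ)/2) := Real.rpow_pos_of_pos ht0 _
    rw [Real.sqrt_eq_rpow, hT1,
      show (k/2 + 1 : ℝ) = (k+1)/2 + 1/2 by ring, Real.rpow_add ht0]
    field_simp
  calc W⁻¹ * N ≤ _ := step1
    _ ≤ _ := step3
    _ ≤ _ := hfin.le
end
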